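/- With Γ = RᵀΔR as above (c,s,τ > 0, c²-s²=1), Γ is not diagonalizable by an orthogonal symplectic matrix: there is no matrix A with AᵀA = I and AᵀJA = J such that AΓAᵀ is diagonal. (Since any OS-diagonalization would yield a diagonal matrix of the form ((1+2τ)(c+s)/(c-s), (1+2τ)(c-s)/(c+s), (c+s)/(c-s), (c-s)/(c+s)), which has at least three distinct entries, contradicting that Γ has only two distinct eigenvalues each with multiplicity 2.) -/

import Mathlib

open Matrix MeasureTheory Real BigOperators

/-- The standard symplectic form on `2*S` coordinates: block diagonal with
blocks `[[0,1],[-1,0]]`. -/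
noncomputable def Jmat (S : ℕ) : Matrix (Fin (2*S)) (Fin (2*S)) ℝ :=
  Matrix.of fun i j =>
    if i.val % 2 = 0 ∧ j.val = i.val + 1 then 1
    else if j.val % 2 = 0 ∧ i.val = j.val + 1 then -1 else 0

/-- A real `2S × 2S` matrix is symplectic if `Aᵀ J A = J`. -/
def IsSymplectic {S : ℕ} (A : Matrix (Fin (2*S)) (Fin (2*S)) ℝ) : Prop :=
  Aᵀ * Jmat S * A = Jmat S

/-- The thermal diagonal matrix `diag (ν₁, ν₁, …, ν_S, ν_S)`. -/
noncomputable def thermal {S : ℕ} (ν : Fin S → ℝ) :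
    Matrix (Fin (2*S)) (Fin (2*S)) ℝ :=
  Matrix.diagonal fun i => ν ⟨i.val / 2, by omega⟩

/-- The symmetric symplectic two-mode squeezing matrix `R`. -/
noncomputable def Rmat (c s : ℝ) : Matrix (Fin (2*2)) (Fin (2*2)) ℝ :=
  !![c, 0, s, 0; 0, c, 0, -s; s, 0, c, 0; 0, -s, 0, c]

/-- The thermal diagonal matrix `Δ = diag(1+2τ, 1+2τ, 1, 1)`. -/
noncomputable def Dmat (τ : ℝ) : Matrix (Fin (2*2)) (Fin (2*2)) ℝ :=
  !![1+2*τ, 0, 0, 0; 0, 1+2*τ, 0, 0; 0, 0, 1, 0; 0, 0, 0, 1]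

noncomputable def gplus (c s τ : ℝ) : ℝ :=
  (1+τ)*(c^2+s^2) + Real.sqrt (4*(1+τ)^2*c^2*s^2 + τ^2)

noncomputable def gminus (c s τ : ℝ) : ℝ :=
  (1+τ)*(c^2+s^2) - Real.sqrt (4*(1+τ)^2*c^2*s^2 + τ^2)

/-! An orthogonal symplectic `A` commutes with `J`, so conjugation by `A` preserves both every
polynomial relation satisfied by `Γ` and the invariants `det Γ` and `tr (JΓ)²`.
`Γ` satisfies `Γ² - SΓ + P = 0` with `S = 2(1+τ)(c²+s²)` and `P = 1+2τ`, so every diagonal entry `fᵢ`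
of `AΓAᵀ` is a root of `t² - St + P`. For a diagonal matrix, `det` and `tr (J·)²` are
`f₀f₁·f₂f₃` and `-2(f₀f₁ + f₂f₃)`, while for `Γ` they are `(1+2τ)²` and `-2((1+2τ)² + 1)`;
hence `f₀f₁ = 1` or `f₂f₃ = 1`. But no two roots multiply to `1`: equal roots would be `±1`,
which are not roots as `s ≠ 0`, and distinct roots multiply to `P = 1+2τ ≠ 1`. -/

open Polynomial

namespace Matrix

variable {n R : Type*} [Fintype n] [DecidableEq n] [CommRing R] {A : Matrix n n R}

theorem commute_of_orthogonal_of_symplectic {J : Matrix n n R} (hA : Aᵀ * A = 1)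
    (hJ : Aᵀ * J * A = J) : Commute J A :=
  calc J * A = A * Aᵀ * J * A := by rw [mul_eq_one_comm.mp hA, Matrix.one_mul]
    _ = A * J := by rw [Matrix.mul_assoc A, Matrix.mul_assoc A, hJ]

theorem orthogonal_conj_pow (hA : Aᵀ * A = 1) (G : Matrix n n R) (k : ℕ) :
    (A * G * Aᵀ) ^ k = A * G ^ k * Aᵀ := by
  induction k with
  | zero => simp [mul_eq_one_comm.mp hA]
  | succ k ih =>
    rw [pow_succ, ih, pow_succ]
    simp only [Matrix.mul_assoc]
    rw [← Matrix.mul_assoc Aᵀ A, hA, Matrix.one_mul]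

theorem aeval_orthogonal_conj (hA : Aᵀ * A = 1) (G : Matrix n n R) (p : R[X]) :
    aeval (A * G * Aᵀ) p = A * aeval G p * Aᵀ := by
  induction p using Polynomial.induction_on' with
  | add p q hp hq => simp only [map_add, hp, hq, Matrix.mul_add, Matrix.add_mul]
  | monomial k a =>
    simp [aeval_monomial, orthogonal_conj_pow hA, Algebra.algebraMap_eq_smul_one]

theorem eval_eq_zero_of_orthogonal_conj_eq_diagonal {G : Matrix n n R} {f : n → R}
    (hA : Aᵀ * A = 1) (hG : A * G * Aᵀ = diagonal f) {p : R[X]} (hp : aeval G p = 0)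
    (i : n) : p.eval (f i) = 0 := by
  have hzero : aeval (diagonal f) p = 0 := by
    rw [← hG, aeval_orthogonal_conj hA, hp, Matrix.mul_zero, Matrix.zero_mul]
  have hdiag : aeval (diagonal f) p = diagonal fun j => p.eval (f j) := by
    simpa [aeval_pi_apply] using aeval_algHom_apply (diagonalAlgHom R) f p
  simpa using congr_fun (congr_fun (hdiag.symm.trans hzero) i) i

theorem trace_pow_mul_orthogonal_conj {J : Matrix n n R} (hA : Aᵀ * A = 1) (hJA : Commute J A)
    (G : Matrix n n R) (k : ℕ) : ((J * (A * G * Aᵀ)) ^ k).trace = ((J * G) ^ k).trace := by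
  have hconj : J * (A * G * Aᵀ) = A * (J * G) * Aᵀ := by
    simp only [← Matrix.mul_assoc, hJA.eq]
  rw [hconj, orthogonal_conj_pow hA, trace_mul_cycle, hA, Matrix.one_mul]

end Matrix

theorem eq_or_mul_eq_of_quadratic_eq_zero {K : Type*} [CommRing K] [IsDomain K] {S P x y : K}
    (hx : x ^ 2 - S * x + P = 0) (hy : y ^ 2 - S * y + P = 0) : x = y ∨ x * y = P := by
  have hfactor : (x - y) * (x + y - S) = 0 := by linear_combination hx - hy
  rcases mul_eq_zero.1 hfactor with hxy | hsum
  · exact Or.inl (sub_eq_zero.1 hxy)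
  · exact Or.inr (by linear_combination x * hsum - hx)

noncomputable def gammaMat (c s τ : ℝ) : Matrix (Fin (2*2)) (Fin (2*2)) ℝ :=
  (Rmat c s)ᵀ * Dmat τ * Rmat c s

theorem gammaMat_eq (c s τ : ℝ) :
    gammaMat c s τ =
      !![(1+2*τ)*c^2+s^2, 0, 2*(1+τ)*c*s, 0;
         0, (1+2*τ)*c^2+s^2, 0, -(2*(1+τ)*c*s);
         2*(1+τ)*c*s, 0, (1+2*τ)*s^2+c^2, 0;
         0, -(2*(1+τ)*c*s), 0, (1+2*τ)*s^2+c^2] := by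
  ext i j
  fin_cases i <;> fin_cases j <;>
    simp [gammaMat, Rmat, Dmat, Matrix.mul_apply, Fin.sum_univ_four] <;> ring

theorem Jmat_two : Jmat 2 = !![0, 1, 0, 0; -1, 0, 0, 0; 0, 0, 0, 1; 0, 0, -1, 0] := by
  ext i j
  fin_cases i <;> fin_cases j <;> norm_num [Jmat]

theorem aeval_gammaMat {c s : ℝ} (τ : ℝ) (h : c^2 - s^2 = 1) :
    aeval (gammaMat c s τ) (X ^ 2 - C (2*(1+τ)*(c^2+s^2)) * X + C (1+2*τ)) = 0 := by
  rw [gammaMat_eq]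
  ext i j
  fin_cases i <;> fin_cases j <;>
    simp [sq, Matrix.mul_apply, Fin.sum_univ_four, Algebra.algebraMap_eq_smul_one] <;>
    first | ring1 | linear_combination (-(1+2*τ)*(c^2-s^2+1)) * h

theorem det_gammaMat {c s : ℝ} (τ : ℝ) (h : c^2 - s^2 = 1) :
    (gammaMat c s τ).det = (1+2*τ)^2 := by
  have hR : (Rmat c s).det = 1 := by
    simp [Rmat, Matrix.det_succ_row_zero, Fin.sum_univ_succ, Fin.succAbove]
    linear_combination (c^2 - s^2 + 1) * h
  have hD : (Dmat τ).det = (1+2*τ)^2 := by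
    simp [Dmat, Matrix.det_succ_row_zero, Fin.sum_univ_succ, Fin.succAbove]
    ring
  rw [gammaMat, det_mul, det_mul, det_transpose, hR, hD]
  ring

theorem trace_Jmat_mul_gammaMat_sq {c s : ℝ} (τ : ℝ) (h : c^2 - s^2 = 1) :
    ((Jmat 2 * gammaMat c s τ) ^ 2).trace = -2 * ((1+2*τ)^2 + 1) := by
  rw [Jmat_two, gammaMat_eq, sq]
  simp [Matrix.trace, Fin.sum_univ_four]
  linear_combination (-(4+8*τ+8*τ^2)*(c^2-s^2+1)) * h

theorem trace_Jmat_mul_diagonal_sq (f : Fin (2*2) → ℝ) :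
    ((Jmat 2 * diagonal f) ^ 2).trace = -2 * (f 0 * f 1 + f 2 * f 3) := by
  have hJf : Jmat 2 * diagonal f =
      !![0, f 1, 0, 0; -f 0, 0, 0, 0; 0, 0, 0, f 3; 0, 0, -f 2, 0] := by
    rw [Jmat_two]
    ext i j
    fin_cases i <;> fin_cases j <;> simp [Matrix.mul_diagonal]
  rw [hJf, sq]
  simp [Matrix.trace, Fin.sum_univ_four]
  ring

theorem mul_ne_one_of_gammaMat_roots {c s τ x y : ℝ} (h : c^2 - s^2 = 1) (hs : s ≠ 0)
    (hτ : 0 < τ) (hx : x ^ 2 - 2*(1+τ)*(c^2+s^2) * x + (1+2*τ) = 0)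
    (hy : y ^ 2 - 2*(1+τ)*(c^2+s^2) * y + (1+2*τ) = 0) : x * y ≠ 1 := by
  intro hxy
  have hs2 : 0 < s ^ 2 := by positivity
  rcases eq_or_mul_eq_of_quadratic_eq_zero hx hy with rfl | hP
  · rcases mul_self_eq_one_iff.1 hxy with rfl | rfl <;> nlinarith
  · linarith

theorem not_OS_diagonalizable_general (c s τ : ℝ)
    (hs : 0 < s) (hτ : 0 < τ) (h : c^2 - s^2 = 1) :
    ¬ ∃ A : Matrix (Fin (2*2)) (Fin (2*2)) ℝ,
        Aᵀ * A = 1 ∧ IsSymplectic A ∧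
        ∃ f : Fin (2*2) → ℝ,
          A * ((Rmat c s)ᵀ * Dmat τ * Rmat c s) * Aᵀ = Matrix.diagonal f := by
  rintro ⟨A, hA, hAJ, f, hdiag⟩
  change A * gammaMat c s τ * Aᵀ = diagonal f at hdiag
  have hroot (i : Fin (2*2)) : f i ^ 2 - 2*(1+τ)*(c^2+s^2) * f i + (1+2*τ) = 0 := by
    simpa using eval_eq_zero_of_orthogonal_conj_eq_diagonal hA hdiag (aeval_gammaMat τ h) i
  have hprod : f 0 * f 1 * (f 2 * f 3) = (1+2*τ)^2 := by
    rw [← det_gammaMat τ h, ← det_conj_of_mul_eq_one (mul_eq_one_comm.mp hA) hA, hdiag,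
      det_diagonal, Fin.prod_univ_four, ← mul_assoc]
  have hsum : f 0 * f 1 + f 2 * f 3 = (1+2*τ)^2 + 1 := by
    have htrace := trace_pow_mul_orthogonal_conj hA
      (commute_of_orthogonal_of_symplectic hA hAJ) (gammaMat c s τ) 2
    rw [hdiag, trace_Jmat_mul_diagonal_sq, trace_Jmat_mul_gammaMat_sq τ h] at htrace
    linarith
  have hone : (f 0 * f 1 - 1) * (f 2 * f 3 - 1) = 0 := by linear_combination hprod - hsum
  rcases mul_eq_zero.1 hone with h01 | h23
  · exact mul_ne_one_of_gammaMat_roots h hs.ne' hτ (hroot 0) (hroot 1) (sub_eq_zero.1 h01)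
  · exact mul_ne_one_of_gammaMat_roots h hs.ne' hτ (hroot 2) (hroot 3) (sub_eq_zero.1 h23)

/-- with `Γ = Rᵀ Δ R` (`c, s, τ > 0`, `c² - s² = 1`), `Γ` is not
diagonalizable by any orthogonal symplectic matrix: there is no `A` with
`Aᵀ A = I` and `Aᵀ J A = J` such that `A Γ Aᵀ` is diagonal. -/
theorem not_OS_diagonalizable (c s τ : ℝ)
    (hc : 0 < c) (hs : 0 < s) (hτ : 0 < τ) (h : c^2 - s^2 = 1) :
    ¬ ∃ A : Matrix (Fin (2*2)) (Fin (2*2)) ℝ,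
        Aᵀ * A = 1 ∧ IsSymplectic A ∧
        ∃ f : Fin (2*2) → ℝ,
          A * ((Rmat c s)ᵀ * Dmat τ * Rmat c s) * Aᵀ = Matrix.diagonal f :=
  not_OS_diagonalizable_general c s τ hs hτ h
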